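/- Let k ≥ 1 and t ≥ 2 be integers, let n ≥ max{12tk + 2k, 4tk^2}, and set N = 2n + t − 2. Suppose the edges of the complete graph K_N are colored red and blue so that there is no red copy of the star K_{1,n−1} and no blue copy of tF_k. Let A be the vertex set of a blue copy of (t−1)F_k and S = V(K_N) \ A. Let S_1 and S_2 be disjoint subsets of S, constructed as follows: Z_1, Z_2 are disjoint subsets of S such that for each i the blue graph inside Z_i has at most 3(k−1) non-isolated vertices and maximum degree at most 2(k−1) and n − 2kt + k + 1 ≤ |Z_i| ≤ n + k − 2; W = S \ (Z_1 ∪ Z_2); W_i = {w ∈ W : w has at most k − 1 blue neighbors in Z_i} for i = 1,2, where W_1 and W_2 partition W; and S_i = Z_i ∪ W_i. Then for each i ∈ {1,2} and each vertex v ∈ S_i, the number of blue neighbors of v in S_{3−i} is at least n − 4kt + 5. -/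

import Mathlib

open SimpleGraph

/-- `host.ContainsCopy G` means that `host` contains a (not necessarily induced) subgraph
isomorphic to `G`. -/
def SimpleGraph.ContainsCopy {β α : Type*} (host : SimpleGraph β) (G : SimpleGraph α) : Prop :=
  ∃ f : α → β, Function.Injective f ∧ ∀ ⦃a b : α⦄, G.Adj a b → host.Adj (f a) (f b)

/-- `ramseyProp G H N` means: for every red-blue coloring of the edges of the complete graph
on `N` vertices (given by its red graph `red`, the blue graph being the complement `redᶜ`),
there is a red copy of `G` or a blue copy of `H`. -/
def ramseyProp {α β : Type*} (G : SimpleGraph α) (H : SimpleGraph β) (N : ℕ) : Prop :=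
  ∀ red : SimpleGraph (Fin N), red.ContainsCopy G ∨ (redᶜ).ContainsCopy H

/-- The Ramsey number `r(G, H)`: the least `N` with the Ramsey property. -/
noncomputable def ramseyNumber {α β : Type*} (G : SimpleGraph α) (H : SimpleGraph β) : ℕ :=
  sInf {N | ramseyProp G H N}

/-- The fan `F_k = K_1 + k·K_2`: `k` triangles sharing exactly one common vertex (`none`). -/
def fan (k : ℕ) : SimpleGraph (Option (Fin k × Fin 2)) :=
  SimpleGraph.fromRel (fun x y => x = none ∨ ∃ i a b, x = some (i, a) ∧ y = some (i, b))

/-- `copies t G` is the disjoint union of `t` copies of `G`. -/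
def copies {α : Type*} (t : ℕ) (G : SimpleGraph α) : SimpleGraph (Fin t × α) where
  Adj x y := x.1 = y.1 ∧ G.Adj x.2 y.2
  symm := ⟨fun _ _ h => ⟨h.1.symm, h.2.symm⟩⟩
  loopless := ⟨fun x h => G.loopless.irrefl x.2 h.2⟩

/-- The blue graph inside `Z` (with blue graph `Rᶜ`) has at most `3(k−1)` non-isolated
vertices and maximum degree at most `2(k−1)`. -/
def blueAlmostIndependent {N : ℕ} (R : SimpleGraph (Fin N)) (k : ℕ) (Z : Set (Fin N)) : Prop :=
  ({v ∈ Z | ∃ w ∈ Z, (Rᶜ).Adj v w}).ncard ≤ 3 * (k - 1) ∧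
    ∀ v ∈ Z, (((Rᶜ).neighborSet v ∩ Z).ncard ≤ 2 * (k - 1))


/-!
A vertex `v` of `Sᵢ` has fewer than `n - 1` red neighbours, hence at least `N - n + 1` blue ones.
At most `2(k - 1)` of them lie in `Zᵢ`, and every one outside `S_{3-i} ∪ Zᵢ` lies outside
`Z₁ ∪ Z₂`, a set of `N - |Z₁| - |Z₂|` vertices. So `v` has at least
`|Z₁| + |Z₂| - n + 1 - 2(k - 1)` blue neighbours in `S_{3-i}`; `N` cancels, and the lower bounds
on `|Zᵢ|` give `n - 4kt + 5`.
-/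

lemma Set.ncard_add_ncard_add_ncard_le {V : Type*} [Finite V] {B X Y T : Set V}
    (hYT : Y ⊆ T) (hXY : Disjoint X Y) :
    B.ncard + X.ncard + Y.ncard ≤ (B ∩ T).ncard + (B ∩ X).ncard + Nat.card V := by
  have hout : B \ T ⊆ (B ∩ X) ∪ (X ∪ Y)ᶜ := by
    intro x ⟨hB, hT⟩
    by_cases hX : x ∈ X
    · exact .inl ⟨hB, hX⟩
    · exact .inr fun h ↦ h.elim hX fun hY ↦ hT (hYT hY)
  have := (Set.ncard_le_ncard hout).trans (Set.ncard_union_le _ _)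
  have := Set.ncard_inter_add_ncard_sdiff_eq_ncard B T
  have := Set.ncard_add_ncard_compl (X ∪ Y)
  have := Set.ncard_union_eq hXY
  omega

namespace SimpleGraph

variable {V : Type*}

lemma ncard_neighborSet_lt_of_not_containsCopy_star [Finite V] {G : SimpleGraph V} {m : ℕ}
    (h : ¬G.ContainsCopy (completeBipartiteGraph (Fin 1) (Fin m))) (v : V) :
    (G.neighborSet v).ncard < m := by
  by_contra! hm
  obtain ⟨s, hs, rfl⟩ := Set.exists_subset_card_eq hm
  let e : Fin s.ncard ≃ s := (Finite.equivFinOfCardEq (Nat.card_coe_set_eq s)).symm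
  have hadj (j) : G.Adj v (e j) := hs (e j).2
  refine h ⟨Sum.elim (fun _ ↦ v) (fun j ↦ e j), ?_, ?_⟩
  · exact Function.injective_of_subsingleton _ |>.sumElim
      (Subtype.val_injective.comp e.injective) fun _ j ↦ (hadj j).ne
  · rintro (_ | j) (_ | j') hab <;> simp at hab
    exacts [hadj j', (hadj j).symm]

lemma ncard_neighborSet_add_ncard_compl_neighborSet [Fintype V] (G : SimpleGraph V) (v : V) :
    (G.neighborSet v).ncard + (Gᶜ.neighborSet v).ncard + 1 = Fintype.card V := by
  rw [neighborSet_compl, add_assoc, Set.ncard_sdiff_singleton_add_one (by simp),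
    Set.ncard_add_ncard_compl, Nat.card_eq_fintype_card]

lemma ncard_add_ncard_le_ncard_compl_neighborSet_inter [Fintype V] {R : SimpleGraph V}
    {n d : ℕ} (hred : ¬R.ContainsCopy (completeBipartiteGraph (Fin 1) (Fin (n - 1))))
    {Z Z' T : Set V} (hZZ' : Disjoint Z Z') (hZ'T : Z' ⊆ T) {v : V}
    (hv : ((Rᶜ).neighborSet v ∩ Z).ncard ≤ d) :
    Z.ncard + Z'.ncard + 1 ≤ ((Rᶜ).neighborSet v ∩ T).ncard + d + n := by
  have hred_deg := ncard_neighborSet_lt_of_not_containsCopy_star hred v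
  have hdeg := ncard_neighborSet_add_ncard_compl_neighborSet R v
  have hcount := Set.ncard_add_ncard_add_ncard_le (B := (Rᶜ).neighborSet v) hZ'T hZZ'
  rw [Nat.card_eq_fintype_card] at hcount
  omega

end SimpleGraph

theorem S_blue_neighbors_general (k t n N : ℕ) (hk : 1 ≤ k)
    (R : SimpleGraph (Fin N))
    (hred : ¬ R.ContainsCopy (completeBipartiteGraph (Fin 1) (Fin (n - 1))))
    (Z₁ Z₂ : Set (Fin N)) (hZdisj : Disjoint Z₁ Z₂)
    (hZ₁ : blueAlmostIndependent R k Z₁) (hZ₂ : blueAlmostIndependent R k Z₂)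
    (hZ₁card : (n : ℤ) - 2 * (k : ℤ) * (t : ℤ) + (k : ℤ) + 1 ≤ (Z₁.ncard : ℤ) ∧
      (Z₁.ncard : ℤ) ≤ (n : ℤ) + (k : ℤ) - 2)
    (hZ₂card : (n : ℤ) - 2 * (k : ℤ) * (t : ℤ) + (k : ℤ) + 1 ≤ (Z₂.ncard : ℤ) ∧
      (Z₂.ncard : ℤ) ≤ (n : ℤ) + (k : ℤ) - 2)
    (W₁ W₂ : Set (Fin N))
    (hW₁ : ∀ w ∈ W₁, ((Rᶜ).neighborSet w ∩ Z₁).ncard ≤ k - 1)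
    (hW₂ : ∀ w ∈ W₂, ((Rᶜ).neighborSet w ∩ Z₂).ncard ≤ k - 1)
    (S₁ S₂ : Set (Fin N)) (hS₁ : S₁ = Z₁ ∪ W₁) (hS₂ : S₂ = Z₂ ∪ W₂) :
    (∀ v ∈ S₁, (n : ℤ) - 4 * (k : ℤ) * (t : ℤ) + 5 ≤ (((Rᶜ).neighborSet v ∩ S₂).ncard : ℤ)) ∧
      (∀ v ∈ S₂,
        (n : ℤ) - 4 * (k : ℤ) * (t : ℤ) + 5 ≤ (((Rᶜ).neighborSet v ∩ S₁).ncard : ℤ)) := by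
  have hS₁deg : ∀ v ∈ S₁, ((Rᶜ).neighborSet v ∩ Z₁).ncard ≤ 2 * (k - 1) := by
    subst hS₁
    rintro v (hv | hv)
    exacts [hZ₁.2 v hv, (hW₁ v hv).trans (by omega)]
  have hS₂deg : ∀ v ∈ S₂, ((Rᶜ).neighborSet v ∩ Z₂).ncard ≤ 2 * (k - 1) := by
    subst hS₂
    rintro v (hv | hv)
    exacts [hZ₂.2 v hv, (hW₂ v hv).trans (by omega)]
  have hbound : ∀ m : ℕ, Z₁.ncard + Z₂.ncard + 1 ≤ m + 2 * (k - 1) + n →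
      (n : ℤ) - 4 * (k : ℤ) * (t : ℤ) + 5 ≤ (m : ℤ) := by
    intro m hm
    have hk' : ((k - 1 : ℕ) : ℤ) = k - 1 := by omega
    zify [hk'] at hm
    linarith [hZ₁card.1, hZ₂card.1]
  refine ⟨fun v hv ↦ hbound _ ?_, fun v hv ↦ hbound _ ?_⟩
  · exact ncard_add_ncard_le_ncard_compl_neighborSet_inter hred hZdisj
      (hS₂ ▸ Set.subset_union_left) (hS₁deg v hv)
  · rw [add_comm Z₁.ncard]
    exact ncard_add_ncard_le_ncard_compl_neighborSet_inter hred hZdisj.symm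
      (hS₁ ▸ Set.subset_union_left) (hS₂deg v hv)

/-- Claim 4 in the proof of Theorem 6: with `Sᵢ = Zᵢ ∪ Wᵢ`, every vertex of `Sᵢ` has at
least `n − 4kt + 5` blue neighbors in `S_{3−i}`. -/
theorem S_blue_neighbors (k t n N : ℕ) (hk : 1 ≤ k) (ht : 2 ≤ t)
    (hn1 : 12 * t * k + 2 * k ≤ n) (hn2 : 4 * t * k ^ 2 ≤ n)
    (hN : N = 2 * n + t - 2)
    (R : SimpleGraph (Fin N))
    (hred : ¬ R.ContainsCopy (completeBipartiteGraph (Fin 1) (Fin (n - 1))))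
    (hblue : ¬ (Rᶜ).ContainsCopy (copies t (fan k)))
    (f : Fin (t - 1) × Option (Fin k × Fin 2) → Fin N)
    (hf_inj : Function.Injective f)
    (hf_adj : ∀ ⦃a b⦄, (copies (t - 1) (fan k)).Adj a b → (Rᶜ).Adj (f a) (f b))
    (A S : Set (Fin N)) (hA : A = Set.range f) (hS : S = Aᶜ)
    (Z₁ Z₂ : Set (Fin N)) (hZ₁S : Z₁ ⊆ S) (hZ₂S : Z₂ ⊆ S) (hZdisj : Disjoint Z₁ Z₂)
    (hZ₁ : blueAlmostIndependent R k Z₁) (hZ₂ : blueAlmostIndependent R k Z₂)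
    (hZ₁card : (n : ℤ) - 2 * (k : ℤ) * (t : ℤ) + (k : ℤ) + 1 ≤ (Z₁.ncard : ℤ) ∧
      (Z₁.ncard : ℤ) ≤ (n : ℤ) + (k : ℤ) - 2)
    (hZ₂card : (n : ℤ) - 2 * (k : ℤ) * (t : ℤ) + (k : ℤ) + 1 ≤ (Z₂.ncard : ℤ) ∧
      (Z₂.ncard : ℤ) ≤ (n : ℤ) + (k : ℤ) - 2)
    (W : Set (Fin N)) (hW : W = S \ (Z₁ ∪ Z₂))
    (W₁ W₂ : Set (Fin N)) (hWunion : W₁ ∪ W₂ = W) (hWdisj : Disjoint W₁ W₂)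
    (hW₁ : ∀ w ∈ W₁, ((Rᶜ).neighborSet w ∩ Z₁).ncard ≤ k - 1)
    (hW₂ : ∀ w ∈ W₂, ((Rᶜ).neighborSet w ∩ Z₂).ncard ≤ k - 1)
    (S₁ S₂ : Set (Fin N)) (hS₁ : S₁ = Z₁ ∪ W₁) (hS₂ : S₂ = Z₂ ∪ W₂) :
    (∀ v ∈ S₁, (n : ℤ) - 4 * (k : ℤ) * (t : ℤ) + 5 ≤ (((Rᶜ).neighborSet v ∩ S₂).ncard : ℤ)) ∧
      (∀ v ∈ S₂,
        (n : ℤ) - 4 * (k : ℤ) * (t : ℤ) + 5 ≤ (((Rᶜ).neighborSet v ∩ S₁).ncard : ℤ)) :=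
  S_blue_neighbors_general k t n N hk R hred Z₁ Z₂ hZdisj hZ₁ hZ₂ hZ₁card hZ₂card W₁ W₂ hW₁ hW₂ S₁
    S₂ hS₁ hS₂
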